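/- arXiv:2007.05409 — 6 statements merged into one kernel-verified Lean document; each statement's English description precedes it below -/
import Mathlib

section
/- Let A be a C*-algebra and X a normed A-bimodule. The set of elements of X satisfying Kishimoto's condition is a closed linear subspace of X. Consequently, if (X_i) is a family of aperiodic A-subbimodules of X whose sum is dense in X, then X is aperiodic. -/
/-!
Since `x ↦ a·x·a` is linear with `‖a·x·a‖ ≤ ‖x‖` for `‖a‖ = 1`, the Kishimoto set is closed
under scalars and closed in norm. For a sum `x + y`, choose `a ∈ D⁺₁` with `a·x·a` small and
put `w = k(a)`, `k(t) = 1 / max(t, 1/2)`. Then `e = aw = wa` has `‖w‖ ≤ 2` and acts as a unit on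
the closed hereditary subalgebra `D' = {b ∈ D : eb = b = be}`, which contains `(a - 1/2)₊ ≠ 0`.
For `b ∈ D'⁺₁` with `b·y·b` small, `b·x·b = (bw)·(a·x·a)·(wb)` is small as well. A closed
subspace containing a dense one is everything, which gives the second claim.
-/

open scoped ComplexOrder ComplexInnerProductSpace
open Filter Topology

noncomputable section

section Hereditary

variable {A : Type*} [NonUnitalNormedRing A] [StarRing A] [Module ℂ A] [PartialOrder A]

/-- A hereditary subalgebra of a C*-algebra. -/
def IsHereditary (D : NonUnitalStarSubalgebra ℂ A) : Prop :=
  ∀ a d : A, d ∈ D → 0 ≤ a → a ≤ d → a ∈ D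

/-- A non-zero, closed, hereditary C*-subalgebra. -/
def NontrivClosedHereditary (D : NonUnitalStarSubalgebra ℂ A) : Prop :=
  IsClosed (D : Set A) ∧ (∃ d ∈ D, d ≠ 0) ∧ IsHereditary D

end Hereditary

section Bim

variable (A X : Type*) [NormedRing A] [NormedAlgebra ℂ A]
  [NormedAddCommGroup X] [NormedSpace ℂ X]

/-- A normed `A`-bimodule structure on the normed space `X`. -/
structure NormedBimoduleStr where
  lsmul : A → X → X
  rsmul : X → A → X
  lsmul_add : ∀ a x y, lsmul a (x + y) = lsmul a x + lsmul a y
  add_lsmul : ∀ a b x, lsmul (a + b) x = lsmul a x + lsmul b x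
  lsmul_smulc : ∀ (c : ℂ) a x, lsmul a (c • x) = c • lsmul a x
  rsmul_add : ∀ x y a, rsmul (x + y) a = rsmul x a + rsmul y a
  add_rsmul : ∀ x a b, rsmul x (a + b) = rsmul x a + rsmul x b
  rsmul_smulc : ∀ (c : ℂ) x a, rsmul (c • x) a = c • rsmul x a
  lsmul_mul : ∀ a b x, lsmul (a * b) x = lsmul a (lsmul b x)
  rsmul_mul : ∀ x a b, rsmul x (a * b) = rsmul (rsmul x a) b
  lsmul_rsmul : ∀ a x b, rsmul (lsmul a x) b = lsmul a (rsmul x b)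
  norm_lsmul_le : ∀ a x, ‖lsmul a x‖ ≤ ‖a‖ * ‖x‖
  norm_rsmul_le : ∀ x a, ‖rsmul x a‖ ≤ ‖x‖ * ‖a‖

variable {A X} [StarRing A] [PartialOrder A]

/-- Kishimoto's condition for an element of a normed `A`-bimodule. -/
def KishimotoBim (M : NormedBimoduleStr A X) (x : X) : Prop :=
  ∀ D : NonUnitalStarSubalgebra ℂ A, NontrivClosedHereditary D →
    ∀ ε : ℝ, 0 < ε → ∃ a ∈ D, 0 ≤ a ∧ ‖a‖ = 1 ∧ ‖M.lsmul a (M.rsmul x a)‖ < ε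

/-- Aperiodicity of a normed `A`-bimodule. -/
def AperiodicBim (M : NormedBimoduleStr A X) : Prop := ∀ x : X, KishimotoBim M x

/-- An `A`-subbimodule of a normed `A`-bimodule. -/
def IsSubBimoduleX (M : NormedBimoduleStr A X) (S : Submodule ℂ X) : Prop :=
  ∀ (a : A), ∀ x ∈ S, M.lsmul a x ∈ S ∧ M.rsmul x a ∈ S

end Bim

section Hereditary

variable {A : Type*} [NonUnitalNormedRing A] [StarRing A] [Module ℂ A] [IsScalarTower ℂ A A]
  [SMulCommClass ℂ A A] [StarModule ℂ A] [PartialOrder A]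

theorem IsHereditary.inf {D₁ D₂ : NonUnitalStarSubalgebra ℂ A} (h₁ : IsHereditary D₁)
    (h₂ : IsHereditary D₂) : IsHereditary (D₁ ⊓ D₂) :=
  fun a d hd ha had => ⟨h₁ a d hd.1 ha had, h₂ a d hd.2 ha had⟩

end Hereditary

section FixedByMul

variable {A : Type*} [Semiring A] [StarRing A] [Algebra ℂ A]

namespace NonUnitalStarSubalgebra

def fixedByMul (e : A) (he : IsSelfAdjoint e) : NonUnitalStarSubalgebra ℂ A where
  carrier := {d | e * d = d ∧ d * e = d}
  add_mem' hx hy := ⟨by rw [mul_add, hx.1, hy.1], by rw [add_mul, hx.2, hy.2]⟩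
  zero_mem' := ⟨mul_zero e, zero_mul e⟩
  mul_mem' hx hy := ⟨by rw [← mul_assoc, hx.1], by rw [mul_assoc, hy.2]⟩
  smul_mem' c _ hx := ⟨by rw [mul_smul_comm, hx.1], by rw [smul_mul_assoc, hx.2]⟩
  star_mem' hx := ⟨by rw [← he.star_eq, ← star_mul, hx.2], by rw [← he.star_eq, ← star_mul, hx.1]⟩

theorem isClosed_fixedByMul [TopologicalSpace A] [ContinuousMul A] [T2Space A] (e : A)
    (he : IsSelfAdjoint e) :
    IsClosed (fixedByMul e he : Set A) :=
  (isClosed_eq (by fun_prop) continuous_id).inter (isClosed_eq (by fun_prop) continuous_id)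

end NonUnitalStarSubalgebra

end FixedByMul

section CStarAlgebra

variable {A : Type*} [CStarAlgebra A]

theorem norm_cfc_inv_max_half_le (a : A) : ‖cfc (fun t : ℝ => (max t 2⁻¹)⁻¹) a‖ ≤ 2 := by
  refine norm_cfc_le (by norm_num) fun t _ => ?_
  rw [norm_inv, inv_le_comm₀ (norm_pos_iff.mpr (by positivity)) (by norm_num)]
  exact (le_max_right t 2⁻¹).trans (Real.le_norm_self _)

variable [PartialOrder A] [StarOrderedRing A]

theorem exists_nonneg_norm_one_mem {D : NonUnitalStarSubalgebra ℂ A} {d : A} (hdD : d ∈ D)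
    (hd : d ≠ 0) : ∃ a ∈ D, 0 ≤ a ∧ ‖a‖ = 1 := by
  have hp : star d * d ≠ 0 := by rwa [Ne, CStarRing.star_mul_self_eq_zero_iff]
  refine ⟨(‖star d * d‖⁻¹ : ℝ) • (star d * d), ?_,
    smul_nonneg (by positivity) (star_mul_self_nonneg d), ?_⟩
  · rw [← Complex.coe_smul]
    exact SMulMemClass.smul_mem _ (mul_mem (star_mem hdD) hdD)
  · rw [norm_smul, norm_inv, norm_norm, inv_mul_cancel₀ (norm_ne_zero_iff.mpr hp)]

theorem mul_eq_self_of_nonneg_of_le {e c d : A} (he : IsSelfAdjoint e) (hed : e * d = d)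
    (hc : 0 ≤ c) (hcd : c ≤ d) : c * e = c := by
  set u := 1 - e
  have hu : IsSelfAdjoint u := (IsSelfAdjoint.one A).sub he
  have hud : u * d * u = 0 := by rw [sub_mul, one_mul, hed, sub_self, zero_mul]
  have huc : u * c * u = 0 :=
    le_antisymm (hud ▸ hu.conjugate_le_conjugate hcd) (hu.conjugate_nonneg hc)
  obtain ⟨s, hs_sa, hs⟩ : ∃ s : A, IsSelfAdjoint s ∧ s * s = c :=
    ⟨CFC.sqrt c, (CFC.sqrt_nonneg c).isSelfAdjoint, CFC.sqrt_mul_sqrt_self c hc⟩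
  have hsu : s * u = 0 := by
    rw [← CStarRing.star_mul_self_eq_zero_iff, star_mul, hu.star_eq, hs_sa.star_eq, ← huc, ← hs]
    noncomm_ring
  calc c * e = c - c * u := by rw [mul_sub, mul_one, sub_sub_cancel]
    _ = c := by rw [← hs, mul_assoc, hsu, mul_zero, sub_zero]

namespace NonUnitalStarSubalgebra

theorem isHereditary_fixedByMul (e : A) (he : IsSelfAdjoint e) :
    IsHereditary (fixedByMul e he) := by
  intro c d hd hc hcd
  have hce : c * e = c := mul_eq_self_of_nonneg_of_le he hd.1 hc hcd
  refine ⟨?_, hce⟩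
  rw [← hc.isSelfAdjoint.star_eq, ← he.star_eq, ← star_mul, hce]

theorem nontrivClosedHereditary_inf_fixedByMul {D : NonUnitalStarSubalgebra ℂ A}
    (hD : NontrivClosedHereditary D) {e d : A} (he : IsSelfAdjoint e) (hdD : d ∈ D) (hd : d ≠ 0)
    (hed : e * d = d) (hde : d * e = d) :
    NontrivClosedHereditary (D ⊓ fixedByMul e he) :=
  ⟨hD.1.inter (isClosed_fixedByMul e he), ⟨d, ⟨hdD, hed, hde⟩, hd⟩,
    hD.2.2.inf (isHereditary_fixedByMul e he)⟩

end NonUnitalStarSubalgebra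

theorem cfc_max_sub_le {a : A} (ha : 0 ≤ a) {r : ℝ} (hr : 0 ≤ r) :
    cfc (fun t : ℝ => max (t - r) 0) a ≤ a :=
  calc cfc (fun t : ℝ => max (t - r) 0) a ≤ cfc (fun t : ℝ => t) a :=
        cfc_mono fun t ht => max_le (by linarith) (spectrum_nonneg_of_nonneg ha ht)
    _ = a := cfc_id' ℝ a

theorem cfc_max_sub_ne_zero {a : A} (ha : 0 ≤ a) {r : ℝ} (hr : 0 ≤ r) (hra : r < ‖a‖) :
    cfc (fun t : ℝ => max (t - r) 0) a ≠ 0 := by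
  intro h0
  have hzero := eqOn_of_cfc_eq_cfc (h0.trans (cfc_const_zero ℝ a).symm)
  have : ‖a‖ ≤ r := by
    rw [← cfc_id' ℝ a]
    refine norm_cfc_le hr fun t ht => ?_
    rw [Real.norm_of_nonneg (spectrum_nonneg_of_nonneg ha ht)]
    linarith [le_max_left (t - r) 0, hzero ht]
  linarith

open NonUnitalStarSubalgebra in
theorem exists_local_unit {D : NonUnitalStarSubalgebra ℂ A} (hD : NontrivClosedHereditary D)
    {a : A} (haD : a ∈ D) (ha : 0 ≤ a) (ha_norm : 2⁻¹ < ‖a‖) :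
    ∃ w : A, ‖w‖ ≤ 2 ∧ ∃ D' ≤ D, NontrivClosedHereditary D' ∧
      ∀ b ∈ D', b * w * a = b ∧ a * w * b = b := by
  have hk : Continuous fun t : ℝ => (max t 2⁻¹)⁻¹ :=
    (continuous_id.max continuous_const).inv₀ fun t => by positivity
  set w := cfc (fun t : ℝ => (max t 2⁻¹)⁻¹) a with hw
  set e := cfc (fun t : ℝ => t * (max t 2⁻¹)⁻¹) a with he
  set d := cfc (fun t : ℝ => max (t - 2⁻¹) 0) a with hd
  have hwa : w * a = a * w := (Commute.cfc_real (Commute.refl a) _).eq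
  have hae : a * w = e := by
    rw [hw, he, cfc_mul (fun t : ℝ => t) _ a continuousOn_id hk.continuousOn, cfc_id' ℝ a]
  have he_sa : IsSelfAdjoint e := cfc_predicate _ a
  have hed : e * d = d := by
    rw [he, hd, ← cfc_mul (fun t : ℝ => t * (max t 2⁻¹)⁻¹) _ a (continuous_id.mul hk).continuousOn]
    refine cfc_congr fun t _ => ?_
    rcases le_or_gt t 2⁻¹ with ht | ht
    · simp [max_eq_right (sub_nonpos.mpr ht)]
    · rw [max_eq_left ht.le, mul_inv_cancel₀ (by positivity), one_mul]
  have hde : d * e = d := (cfc_commute_cfc _ _ a).eq.trans hed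
  have hdD : d ∈ D :=
    hD.2.2 d a haD (cfc_nonneg fun t _ => le_max_right _ _) (cfc_max_sub_le ha (by norm_num))
  have hd0 : d ≠ 0 := cfc_max_sub_ne_zero ha (by norm_num) ha_norm
  refine ⟨w, norm_cfc_inv_max_half_le a, D ⊓ fixedByMul e he_sa, inf_le_left,
    nontrivClosedHereditary_inf_fixedByMul hD he_sa hdD hd0 hed hde, fun b hb => ⟨?_, ?_⟩⟩
  · rw [mul_assoc, hwa, hae]
    exact hb.2.2
  · rw [hae]
    exact hb.2.1

end CStarAlgebra

namespace NormedBimoduleStr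

section Sandwich

variable {A X : Type*} [NormedRing A] [NormedAddCommGroup X] [NormedSpace ℂ X]
  (M : NormedBimoduleStr A X)

def sandwich (a b : A) : X →ₗ[ℂ] X where
  toFun x := M.lsmul a (M.rsmul x b)
  map_add' x y := by rw [M.rsmul_add, M.lsmul_add]
  map_smul' c x := by rw [M.rsmul_smulc, M.lsmul_smulc, RingHom.id_apply]

theorem sandwich_apply (a b : A) (x : X) : M.sandwich a b x = M.lsmul a (M.rsmul x b) := rfl

theorem sandwich_sandwich (a b c d : A) (x : X) :
    M.sandwich a b (M.sandwich c d x) = M.sandwich (a * c) (d * b) x := by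
  simp only [sandwich_apply, M.lsmul_rsmul, M.lsmul_mul, M.rsmul_mul]

theorem norm_sandwich_le (a b : A) (x : X) : ‖M.sandwich a b x‖ ≤ ‖a‖ * ‖x‖ * ‖b‖ := by
  rw [mul_assoc]
  exact (M.norm_lsmul_le _ _).trans (by gcongr; exact M.norm_rsmul_le x b)

variable [NormedAlgebra ℂ A] [StarRing A] [PartialOrder A]

theorem kishimotoBim_iff (x : X) :
    KishimotoBim M x ↔ ∀ D : NonUnitalStarSubalgebra ℂ A, NontrivClosedHereditary D →
      ∀ ε : ℝ, 0 < ε → ∃ a ∈ D, 0 ≤ a ∧ ‖a‖ = 1 ∧ ‖M.sandwich a a x‖ < ε :=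
  Iff.rfl

theorem isClosed_setOf_kishimotoBim : IsClosed {x : X | KishimotoBim M x} := by
  refine isClosed_of_closure_subset fun x hx => ?_
  change KishimotoBim M x
  rw [kishimotoBim_iff]
  intro D hD ε hε
  obtain ⟨y, hy, hxy⟩ := Metric.mem_closure_iff.mp hx (ε / 2) (by positivity)
  obtain ⟨a, haD, ha, ha1, hay⟩ := (kishimotoBim_iff M y).mp hy D hD (ε / 2) (by positivity)
  refine ⟨a, haD, ha, ha1, ?_⟩
  have hxy' : ‖M.sandwich a a (x - y)‖ < ε / 2 := by
    refine lt_of_le_of_lt ?_ (dist_eq_norm x y ▸ hxy)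
    simpa [ha1] using M.norm_sandwich_le a a (x - y)
  calc ‖M.sandwich a a x‖ = ‖M.sandwich a a (x - y) + M.sandwich a a y‖ := by
        rw [← map_add, sub_add_cancel]
    _ ≤ ‖M.sandwich a a (x - y)‖ + ‖M.sandwich a a y‖ := norm_add_le _ _
    _ < ε / 2 + ε / 2 := add_lt_add hxy' hay
    _ = ε := add_halves ε

end Sandwich

section Kishimoto

variable {A X : Type*} [CStarAlgebra A] [PartialOrder A] [StarOrderedRing A]
  [NormedAddCommGroup X] [NormedSpace ℂ X] (M : NormedBimoduleStr A X)

theorem kishimotoBim_zero : KishimotoBim M 0 := by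
  intro D hD ε hε
  obtain ⟨d, hdD, hd⟩ := hD.2.1
  obtain ⟨a, haD, ha, ha1⟩ := exists_nonneg_norm_one_mem hdD hd
  exact ⟨a, haD, ha, ha1, by simpa [← sandwich_apply] using hε⟩

variable {M}

theorem KishimotoBim.smul {x : X} (hx : KishimotoBim M x) (c : ℂ) :
    KishimotoBim M (c • x) := by
  rcases eq_or_ne c 0 with rfl | hc
  · simpa using kishimotoBim_zero M
  rw [kishimotoBim_iff] at hx ⊢
  intro D hD ε hε
  have hc' : 0 < ‖c‖ := norm_pos_iff.mpr hc
  obtain ⟨a, haD, ha, ha1, hax⟩ := hx D hD (ε / ‖c‖) (by positivity)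
  refine ⟨a, haD, ha, ha1, ?_⟩
  rw [map_smul, norm_smul]
  exact (lt_div_iff₀' hc').mp hax

theorem KishimotoBim.add {x y : X} (hx : KishimotoBim M x) (hy : KishimotoBim M y) :
    KishimotoBim M (x + y) := by
  rw [kishimotoBim_iff] at hx hy ⊢
  intro D hD ε hε
  obtain ⟨a, haD, ha, ha1, hax⟩ := hx D hD (ε / 8) (by positivity)
  obtain ⟨w, hw, D', hD'D, hD', hunit⟩ := exists_local_unit hD haD ha (by rw [ha1]; norm_num)
  obtain ⟨b, hbD', hb, hb1, hby⟩ := hy D' hD' (ε / 2) (by positivity)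
  refine ⟨b, hD'D hbD', hb, hb1, ?_⟩
  have hbx : M.sandwich b b x = M.sandwich (b * w) (w * b) (M.sandwich a a x) := by
    rw [sandwich_sandwich, (hunit b hbD').1, ← mul_assoc, (hunit b hbD').2]
  have hbw : ‖b * w‖ ≤ 2 := (norm_mul_le b w).trans (by rw [hb1, one_mul]; exact hw)
  have hwb : ‖w * b‖ ≤ 2 := (norm_mul_le w b).trans (by rw [hb1, mul_one]; exact hw)
  calc ‖M.sandwich b b (x + y)‖ ≤ ‖M.sandwich b b x‖ + ‖M.sandwich b b y‖ := by
        rw [map_add]; exact norm_add_le _ _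
    _ ≤ 2 * ‖M.sandwich a a x‖ * 2 + ‖M.sandwich b b y‖ := by
        rw [hbx]
        gcongr
        exact (M.norm_sandwich_le _ _ _).trans (by gcongr)
    _ < 2 * (ε / 8) * 2 + ε / 2 := by gcongr
    _ = ε := by ring

variable (M)

def kishimotoSubmodule : Submodule ℂ X where
  carrier := {x | KishimotoBim M x}
  add_mem' := KishimotoBim.add
  zero_mem' := kishimotoBim_zero M
  smul_mem' c _ hx := KishimotoBim.smul hx c

theorem aperiodicBim_of_dense_iSup {ι : Type*} (Xi : ι → Submodule ℂ X)
    (hXi : ∀ i, ∀ x ∈ Xi i, KishimotoBim M x)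
    (hdense : Dense ((⨆ i, Xi i : Submodule ℂ X) : Set X)) : AperiodicBim M := by
  have hle : (⨆ i, Xi i) ≤ M.kishimotoSubmodule := iSup_le hXi
  intro x
  exact (isClosed_setOf_kishimotoBim M).closure_subset_iff.mpr hle
    (hdense.closure_eq ▸ Set.mem_univ x)

end Kishimoto

end NormedBimoduleStr

/-- the set of elements of a normed `A`-bimodule `X` satisfying Kishimoto's
condition is a closed linear subspace of `X`; consequently, if a family of aperiodic
`A`-subbimodules has dense sum, then `X` is aperiodic. -/
theorem kishimoto_set_isClosed_submodule_and_dense_sum_aperiodic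
    {A X : Type*} [NormedRing A] [StarRing A] [CStarRing A] [NormedAlgebra ℂ A]
    [StarModule ℂ A] [PartialOrder A] [StarOrderedRing A] [CompleteSpace A]
    [NormedAddCommGroup X] [NormedSpace ℂ X] (M : NormedBimoduleStr A X) :
    (∃ S : Submodule ℂ X, IsClosed (S : Set X) ∧ (S : Set X) = {x : X | KishimotoBim M x}) ∧
    (∀ (ιT : Type) (Xi : ιT → Submodule ℂ X), (∀ i, IsSubBimoduleX M (Xi i)) →
      (∀ i, ∀ x ∈ Xi i, KishimotoBim M x) →
      Dense ((⨆ i, Xi i : Submodule ℂ X) : Set X) → AperiodicBim M) := by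
  let _ : CStarAlgebra A := { ‹NormedRing A›, ‹StarRing A›, ‹CStarRing A›, ‹NormedAlgebra ℂ A›,
    ‹StarModule ℂ A›, ‹CompleteSpace A› with }
  exact ⟨⟨M.kishimotoSubmodule, M.isClosed_setOf_kishimotoBim, rfl⟩,
    fun _ Xi _ hXi hdense => M.aperiodicBim_of_dense_iSup Xi hXi hdense⟩
end
end

section
/- Let B ⊇ A ⊆ Ã be C*-inclusions such that the Banach A-bimodule B/A is aperiodic and Ã contains no non-zero aperiodic A-subbimodule. Then there is at most one generalised expectation E : B → Ã (a completely positive contraction restricting to the identity on A). -/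
/-!
A generalised expectation `E` is an `A`-bimodule map: since `E ∘ ι = j` is multiplicative,
positivity of the matrix `[E (bᵢ⋆ bₖ)]` for `b = (1, ι a, x)` forces
`E ((ι a)⋆ x) = (j a)⋆ E x` (Choi's multiplicative-domain argument). Hence `F = E₁ - E₂` is a
bounded bimodule map vanishing on `A`, so `j a · F x · j a = F (ι a · x · ι a - ι y)` is small
whenever `a x a` is close to `A`. The range of `F` is therefore an aperiodic subbimodule of `C`,
and anti-aperiodicity makes it zero.
-/

open scoped ComplexOrder ComplexInnerProductSpace
open Filter Topology

noncomputable section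

section Incl

variable {A B : Type*}
  [NormedRing A] [StarRing A] [NormedAlgebra ℂ A] [PartialOrder A]
  [NormedRing B] [StarRing B] [NormedAlgebra ℂ B]

/-- Kishimoto's condition for an element of `B`, viewed as an `A`-bimodule via `j`. -/
def KishimotoElem (j : A →⋆ₐ[ℂ] B) (x : B) : Prop :=
  ∀ D : NonUnitalStarSubalgebra ℂ A, NontrivClosedHereditary D →
    ∀ ε : ℝ, 0 < ε → ∃ a ∈ D, 0 ≤ a ∧ ‖a‖ = 1 ∧ ‖j a * x * j a‖ < ε

/-- Kishimoto's condition for an element of the quotient bimodule `B/A`. -/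
def KishimotoQuot (j : A →⋆ₐ[ℂ] B) (x : B) : Prop :=
  ∀ D : NonUnitalStarSubalgebra ℂ A, NontrivClosedHereditary D →
    ∀ ε : ℝ, 0 < ε → ∃ a ∈ D, 0 ≤ a ∧ ‖a‖ = 1 ∧ ∃ y : A, ‖j a * x * j a - j y‖ < ε

/-- The C*-inclusion `j : A → B` is aperiodic if the Banach `A`-bimodule `B/A`
is aperiodic. -/
def AperiodicInclusion (j : A →⋆ₐ[ℂ] B) : Prop := ∀ x : B, KishimotoQuot j x

/-- An `A`-subbimodule of `B` (with `B` an `A`-bimodule via `j`). -/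
def IsSubBimodule (j : A →⋆ₐ[ℂ] B) (S : Submodule ℂ B) : Prop :=
  ∀ a : A, ∀ x ∈ S, j a * x ∈ S ∧ x * j a ∈ S

/-- The inclusion `j : A → B` is anti-aperiodic: `B` contains no non-zero aperiodic
`A`-subbimodule. -/
def AntiAperiodic (j : A →⋆ₐ[ℂ] B) : Prop :=
  ∀ S : Submodule ℂ B, IsSubBimodule j S → (∀ x ∈ S, KishimotoElem j x) → S = ⊥

end Incl

section CCP

variable {B C : Type*}
  [NormedRing B] [StarRing B] [NormedAlgebra ℂ B]
  [NormedRing C] [StarRing C] [NormedAlgebra ℂ C] [PartialOrder C]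

/-- A completely positive contraction between C*-algebras. -/
def IsCCP (T : B →ₗ[ℂ] C) : Prop :=
  (∀ b, ‖T b‖ ≤ ‖b‖) ∧
  ∀ (n : ℕ) (b : Fin n → B) (c : Fin n → C),
    0 ≤ ∑ i, ∑ k, star (c i) * T (star (b i) * b k) * c k

end CCP

/-- A generalised expectation for the inclusion `ι : A → B`, relative to the
inclusion `j : A → C`: a completely positive contraction restricting to the
identity on `A`. -/
def IsGenExpectation {A B C : Type*}
    [NormedRing A] [StarRing A] [NormedAlgebra ℂ A]
    [NormedRing B] [StarRing B] [NormedAlgebra ℂ B]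
    [NormedRing C] [StarRing C] [NormedAlgebra ℂ C] [PartialOrder C]
    (ι : A →⋆ₐ[ℂ] B) (j : A →⋆ₐ[ℂ] C) (E : B →ₗ[ℂ] C) : Prop :=
  IsCCP E ∧ ∀ a : A, E (ι a) = j a

section PositiveCone

variable {C : Type*} [CStarAlgebra C] [PartialOrder C] [StarOrderedRing C]

theorem eq_zero_of_forall_smul_add_nonneg {k r : C} (h : ∀ t : ℝ, 0 ≤ t • k + r) : k = 0 := by
  have nonneg : ∀ m : C, (∀ t : ℝ, 0 ≤ t • m + r) → 0 ≤ m := by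
    intro m hm
    have hlim : Tendsto (fun t : ℝ => m + t⁻¹ • r) atTop (𝓝 m) := by
      simpa using tendsto_const_nhds.add ((tendsto_inv_atTop_zero (𝕜 := ℝ)).smul_const r)
    refine ge_of_tendsto hlim ?_
    filter_upwards [eventually_gt_atTop 0] with t ht
    have := smul_nonneg (inv_nonneg.2 ht.le) (hm t)
    rwa [smul_add, smul_smul, inv_mul_cancel₀ ht.ne', one_smul] at this
  exact le_antisymm (neg_nonneg.1 (nonneg (-k) fun t => by simpa using h (-t))) (nonneg k h)

theorem eq_zero_of_forall_conj_smul_add_smul_add_nonneg {d d' r : C}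
    (h : ∀ z : ℂ, 0 ≤ (starRingEnd ℂ z) • d + z • d' + r) : d = 0 ∧ d' = 0 := by
  have hsum : d + d' = 0 := eq_zero_of_forall_smul_add_nonneg fun t => by
    simpa [Complex.coe_smul, smul_add] using h t
  have hdiff : Complex.I • (d' - d) = 0 := eq_zero_of_forall_smul_add_nonneg fun t => by
    convert h (t * Complex.I) using 2
    simp only [map_mul, Complex.conj_ofReal, Complex.conj_I, mul_neg, neg_smul]
    module
  have heq : d' = d := sub_eq_zero.1 ((smul_eq_zero.1 hdiff).resolve_left Complex.I_ne_zero)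
  have hd : d = 0 := by
    rw [heq, ← two_smul ℂ] at hsum
    exact (smul_eq_zero.1 hsum).resolve_left two_ne_zero
  exact ⟨hd, heq.trans hd⟩

end PositiveCone

theorem IsCCP.continuous {B C : Type*}
    [NormedRing B] [StarRing B] [NormedAlgebra ℂ B]
    [NormedRing C] [StarRing C] [NormedAlgebra ℂ C] [PartialOrder C]
    {E : B →ₗ[ℂ] C} (hE : IsCCP E) : Continuous E :=
  AddMonoidHomClass.continuous_of_bound E 1 fun x => by simpa using hE.1 x

structure IsBimoduleMap {A B C : Type*}
    [NormedRing A] [StarRing A] [NormedAlgebra ℂ A]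
    [NormedRing B] [StarRing B] [NormedAlgebra ℂ B]
    [NormedRing C] [StarRing C] [NormedAlgebra ℂ C]
    (ι : A →⋆ₐ[ℂ] B) (j : A →⋆ₐ[ℂ] C) (F : B →ₗ[ℂ] C) : Prop where
  map_mul_left : ∀ (a : A) (x : B), F (ι a * x) = j a * F x
  map_mul_right : ∀ (a : A) (x : B), F (x * ι a) = F x * j a

section Expectation

variable {A B C : Type*}
  [NormedRing A] [StarRing A] [NormedAlgebra ℂ A]
  [NormedRing B] [StarRing B] [NormedAlgebra ℂ B]
  [CStarAlgebra C] [PartialOrder C] [StarOrderedRing C]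
  {ι : A →⋆ₐ[ℂ] B} {j : A →⋆ₐ[ℂ] C} {E : B →ₗ[ℂ] C}

theorem IsGenExpectation.map_star_mul_and_map_mul (hE : IsGenExpectation ι j E) (a : A) (x : B) :
    E (star (ι a) * x) = star (j a) * E x ∧ E (star x * ι a) = E (star x) * j a := by
  have hE1 : E 1 = 1 := by simpa using hE.2 1
  have hEa : E (ι a) = j a := hE.2 a
  have hEa' : E (star (ι a)) = star (j a) := by rw [← map_star, hE.2, map_star]
  have hEaa : E (star (ι a) * ι a) = star (j a) * j a := by
    rw [← map_star, ← map_mul, hE.2, map_mul, map_star]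
  obtain ⟨hl, hr⟩ := eq_zero_of_forall_conj_smul_add_smul_add_nonneg
    (d := E (star (ι a) * x) - star (j a) * E x) (d' := E (star x * ι a) - E (star x) * j a)
    (r := E (star x * x) - E (star x) * E x) fun z => by
      -- with these weights the terms quadratic in `z` cancel
      have h := hE.1.2 3 ![1, ι a, x] ![-(z • j a + E x), z • 1, 1]
      simp only [Fin.sum_univ_three, Matrix.cons_val_zero, Matrix.cons_val_one, Matrix.head_cons,
        Matrix.cons_val_two, Matrix.tail_cons, star_one, one_mul, mul_one] at h
      rw [hE1, hEa, hEa', hEaa] at h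
      refine h.trans_eq ?_
      simp only [star_neg, star_add, star_smul, star_one, RCLike.star_def, neg_mul, mul_neg,
        add_mul, mul_add, smul_mul_assoc, mul_smul_comm, smul_smul, one_mul, mul_one]
      module
  exact ⟨sub_eq_zero.1 hl, sub_eq_zero.1 hr⟩

theorem IsGenExpectation.isBimoduleMap (hE : IsGenExpectation ι j E) : IsBimoduleMap ι j E where
  map_mul_left a x := by
    simpa only [map_star, star_star] using (hE.map_star_mul_and_map_mul (star a) x).1
  map_mul_right a x := by
    simpa only [star_star] using (hE.map_star_mul_and_map_mul a (star x)).2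

end Expectation

namespace IsBimoduleMap

variable {A B C : Type*}
  [NormedRing A] [StarRing A] [NormedAlgebra ℂ A]
  [NormedRing B] [StarRing B] [NormedAlgebra ℂ B]
  [NormedRing C] [StarRing C] [NormedAlgebra ℂ C]
  {ι : A →⋆ₐ[ℂ] B} {j : A →⋆ₐ[ℂ] C} {F G : B →ₗ[ℂ] C}

theorem sub (hF : IsBimoduleMap ι j F) (hG : IsBimoduleMap ι j G) :
    IsBimoduleMap ι j (F - G) where
  map_mul_left a x := by simp [hF.map_mul_left, hG.map_mul_left, mul_sub]
  map_mul_right a x := by simp [hF.map_mul_right, hG.map_mul_right, sub_mul]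

theorem isSubBimodule_range (hF : IsBimoduleMap ι j F) : IsSubBimodule j (LinearMap.range F) := by
  rintro a _ ⟨x, rfl⟩
  exact ⟨⟨ι a * x, hF.map_mul_left a x⟩, ⟨x * ι a, hF.map_mul_right a x⟩⟩

theorem kishimotoElem_apply [PartialOrder A] (hF : IsBimoduleMap ι j F) (hFc : Continuous F)
    (hFA : ∀ a, F (ι a) = 0) {x : B} (hx : KishimotoQuot ι x) : KishimotoElem j (F x) := by
  intro D hD ε hε
  obtain ⟨δ, hδ, hFδ⟩ := Metric.continuousAt_iff.1 hFc.continuousAt ε hε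
  obtain ⟨a, haD, ha0, ha1, y, hy⟩ := hx D hD δ hδ
  refine ⟨a, haD, ha0, ha1, ?_⟩
  have hcompress : j a * F x * j a = F (ι a * x * ι a - ι y) := by
    rw [map_sub, hFA, sub_zero, hF.map_mul_right, hF.map_mul_left]
  have h := hFδ (x := ι a * x * ι a - ι y) (by rwa [dist_zero_right])
  rwa [map_zero, dist_zero_right, ← hcompress] at h

end IsBimoduleMap

theorem genExpectation_unique_of_aperiodic_antiAperiodic_general
    {A B C : Type*} [NormedRing A] [StarRing A] [NormedAlgebra ℂ A] [PartialOrder A]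
    [NormedRing B] [StarRing B] [NormedAlgebra ℂ B]
    [NormedRing C] [StarRing C] [CStarRing C] [NormedAlgebra ℂ C]
    [StarModule ℂ C] [PartialOrder C] [StarOrderedRing C] [CompleteSpace C]
    (ι : A →⋆ₐ[ℂ] B) (j : A →⋆ₐ[ℂ] C)
    (hap : AperiodicInclusion ι) (hanti : AntiAperiodic j)
    (E₁ E₂ : B →ₗ[ℂ] C) (hE₁ : IsGenExpectation ι j E₁) (hE₂ : IsGenExpectation ι j E₂) :
    E₁ = E₂ := by
  let _ : CStarAlgebra C := {}
  have hF : IsBimoduleMap ι j (E₁ - E₂) := hE₁.isBimoduleMap.sub hE₂.isBimoduleMap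
  have hFc : Continuous (E₁ - E₂) := hE₁.1.continuous.sub hE₂.1.continuous
  have hFA : ∀ a, (E₁ - E₂) (ι a) = 0 := by simp [hE₁.2, hE₂.2]
  have hrange : LinearMap.range (E₁ - E₂) = ⊥ := hanti _ hF.isSubBimodule_range <| by
    rintro _ ⟨x, rfl⟩
    exact hF.kishimotoElem_apply hFc hFA (hap x)
  exact sub_eq_zero.1 (LinearMap.range_eq_bot.1 hrange)

/-- if `A ⊆ B` is aperiodic and `A ⊆ Ã` is anti-aperiodic, then there is at
most one generalised expectation `E : B → Ã`. -/
theorem genExpectation_unique_of_aperiodic_antiAperiodic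
    {A B C : Type*} [NormedRing A] [StarRing A] [CStarRing A] [NormedAlgebra ℂ A]
    [StarModule ℂ A] [PartialOrder A] [StarOrderedRing A] [CompleteSpace A]
    [NormedRing B] [StarRing B] [CStarRing B] [NormedAlgebra ℂ B]
    [StarModule ℂ B] [PartialOrder B] [StarOrderedRing B] [CompleteSpace B]
    [NormedRing C] [StarRing C] [CStarRing C] [NormedAlgebra ℂ C]
    [StarModule ℂ C] [PartialOrder C] [StarOrderedRing C] [CompleteSpace C]
    (ι : A →⋆ₐ[ℂ] B) (hι : Isometry ι) (j : A →⋆ₐ[ℂ] C) (hj : Isometry j)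
    (hap : AperiodicInclusion ι) (hanti : AntiAperiodic j)
    (E₁ E₂ : B →ₗ[ℂ] C) (hE₁ : IsGenExpectation ι j E₁) (hE₂ : IsGenExpectation ι j E₂) :
    E₁ = E₂ :=
  genExpectation_unique_of_aperiodic_antiAperiodic_general ι j hap hanti E₁ E₂ hE₁ hE₂
end
end

section
/- Let A be a C*-algebra, u, v unitaries in the unitization A¹ = A ⊕ ℂ·1, and b a positive element of a C*-algebra Ã containing A. Suppose there exist δ > 0 and a non-zero hereditary C*-subalgebra D ⊆ A such that ‖x u b^{1/2} v x‖ ≥ δ for all positive norm-one x ∈ D. Then for every positive norm-one y in the hereditary subalgebra u* D u one has ‖y b y‖ ≥ δ². -/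
open scoped ComplexOrder ComplexInnerProductSpace
open Filter Topology

noncomputable section

/-- if `‖x u b^(1/2) v x‖ ≥ δ` for all positive norm-one `x` in a non-zero
hereditary C*-subalgebra `D ⊆ A` (with `u, v` unitaries in the unitization `A¹` acting on
`Ã ⊇ A` and `r = b^(1/2)` the positive square root of `b ≥ 0`), then
`‖y b y‖ ≥ δ²` for every positive norm-one `y` in `u* D u`. -/
theorem norm_conj_sqrt_lower_bound
    {A C : Type*}
    [NonUnitalNormedRing A] [StarRing A] [CStarRing A] [NormedSpace ℂ A]
    [IsScalarTower ℂ A A] [SMulCommClass ℂ A A] [StarModule ℂ A]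
    [PartialOrder A] [StarOrderedRing A] [CompleteSpace A]
    [NormedRing C] [StarRing C] [CStarRing C] [NormedAlgebra ℂ C]
    [StarModule ℂ C] [PartialOrder C] [StarOrderedRing C] [CompleteSpace C]
    (j : A →⋆ₙₐ[ℂ] C) (hj : Isometry j)
    (u v : Unitization ℂ A)
    (hu : u ∈ unitary (Unitization ℂ A)) (hv : v ∈ unitary (Unitization ℂ A))
    (b r : C) (hb : 0 ≤ b) (hr : 0 ≤ r) (hr2 : r * r = b)
    (D : NonUnitalStarSubalgebra ℂ A) (hD : NontrivClosedHereditary D)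
    (δ : ℝ) (hδ : 0 < δ)
    (hlow : ∀ x ∈ D, 0 ≤ x → ‖x‖ = 1 →
      δ ≤ ‖j x * ((Unitization.starLift j) u * r * (Unitization.starLift j) v * j x)‖) :
    ∀ d ∈ D, 0 ≤ d → ‖d‖ = 1 →
      δ ^ 2 ≤ ‖(star ((Unitization.starLift j) u) * j d * (Unitization.starLift j) u) * b *
        (star ((Unitization.starLift j) u) * j d * (Unitization.starLift j) u)‖ := by
  intro d hd hdpos hdn
  set U := (Unitization.starLift j) u with hUdef
  set V := (Unitization.starLift j) v with hVdef
  have hU : U ∈ unitary C := by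
    rw [Unitary.mem_iff] at hu ⊢
    exact ⟨by rw [← map_star, ← map_mul, hu.1, map_one],
           by rw [← map_star, ← map_mul, hu.2, map_one]⟩
  have hV : V ∈ unitary C := by
    rw [Unitary.mem_iff] at hv ⊢
    exact ⟨by rw [← map_star, ← map_mul, hv.1, map_one],
           by rw [← map_star, ← map_mul, hv.2, map_one]⟩
  set x := j d with hxdef
  have hxs : star x = x := by
    rw [hxdef, ← map_star]
    exact congrArg j (IsSelfAdjoint.of_nonneg hdpos)
  have hxn : ‖x‖ = 1 := by
    rw [hxdef, hj.norm_map_of_map_zero (map_zero j)]; exact hdn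
  have hrs : star r = r := IsSelfAdjoint.of_nonneg hr
  -- Step 1 : δ ≤ ‖x * U * r‖
  have h1 : δ ≤ ‖x * (U * r * V * x)‖ := hlow d hd hdpos hdn
  have h2 : x * (U * r * V * x) = (x * U * r) * (V * x) := by noncomm_ring
  have h3 : ‖(x * U * r) * (V * x)‖ ≤ ‖x * U * r‖ := by
    calc ‖(x * U * r) * (V * x)‖ ≤ ‖x * U * r‖ * ‖V * x‖ := norm_mul_le _ _
    _ = ‖x * U * r‖ := by
        rw [CStarRing.norm_mem_unitary_mul x hV, hxn, mul_one]
  have h4 : δ ≤ ‖x * U * r‖ := by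
    rw [h2] at h1; exact h1.trans h3
  -- Step 2 : rewrite the goal
  have hstar : star (x * U * r) = r * (star U * x) := by
    simp [star_mul, hxs, hrs, mul_assoc]
  have key : (star U * x * U) * b * (star U * x * U)
      = star U * ((x * U * r) * star (x * U * r)) * U := by
    rw [hstar, ← hr2]; noncomm_ring
  rw [key, CStarRing.norm_mul_mem_unitary _ hU,
    CStarRing.norm_mem_unitary_mul _ (Unitary.star_mem hU),
    CStarRing.norm_self_mul_star, ← pow_two]
  exact pow_le_pow_left₀ hδ.le h4 2
end
end

section
/- Let B ⊇ A ⊆ Ã be C*-inclusions with A ⊆ B aperiodic and A ⊆ Ã anti-aperiodic, and let E : B → Ã be a generalised expectation. Then ker E is the largest aperiodic A-subbimodule of B. -/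
open scoped ComplexOrder ComplexInnerProductSpace
open Filter Topology

noncomputable section

/-!
Every `a ∈ A` lies in the multiplicative domain of `E`: the Kadison–Schwarz defect
`E(x⋆x) - E(x)⋆E(x)` vanishes at `x = ι a` because `E` fixes `A`, and a positive `2 × 2` defect
matrix with a vanishing diagonal corner has vanishing off-diagonal entries. So `E` is an
`A`-bimodule map. Hence `ker E` is a subbimodule, and it is aperiodic: if a compression `a x a` of
`x ∈ ker E` is close to `y ∈ A`, then `‖y‖ = ‖E(a x a - y)‖` is small too. Conversely, `E` maps an
aperiodic subbimodule of `B` onto an aperiodic subbimodule of `Ã`, which vanishes by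
anti-aperiodicity.
-/

section CStarAlgebra

variable {C : Type*} [CStarAlgebra C] [PartialOrder C] [StarOrderedRing C]

lemma eq_zero_of_forall_real_smul_add_nonneg {h r : C} (H : ∀ t : ℝ, 0 ≤ (t : ℂ) • h + r) :
    h = 0 := by
  have bound : ∀ t : ℝ, 0 < t → t * ‖h‖ ≤ 3 * ‖r‖ := by
    intro t ht
    have hle : (t : ℂ) • h + r ≤ r + r := by
      have := H (-t)
      rw [Complex.ofReal_neg, neg_smul, ← sub_eq_neg_add, sub_nonneg] at this
      exact add_le_add_left this r
    have := CStarAlgebra.norm_le_norm_of_nonneg_of_le (H t) hle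
    calc t * ‖h‖ = ‖(t : ℂ) • h‖ := by rw [norm_smul, Complex.norm_real, Real.norm_of_nonneg ht.le]
      _ ≤ ‖(t : ℂ) • h + r‖ + ‖r‖ := norm_le_add_norm_add _ _
      _ ≤ ‖r + r‖ + ‖r‖ := by gcongr
      _ ≤ 3 * ‖r‖ := by linarith [norm_add_le r r]
  by_contra hne
  have hpos : 0 < ‖h‖ := norm_pos_iff.mpr hne
  have := bound ((3 * ‖r‖ + 1) / ‖h‖) (by positivity)
  rw [div_mul_cancel₀ _ hpos.ne'] at this
  linarith

lemma eq_zero_of_forall_star_smul_add_smul_star_add_nonneg {z r : C}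
    (H : ∀ μ : ℂ, 0 ≤ star μ • z + μ • star z + r) : z = 0 := by
  have hre : z + star z = 0 := eq_zero_of_forall_real_smul_add_nonneg fun t ↦ by
    simpa [smul_add] using H t
  have him : Complex.I • (star z - z) = 0 := eq_zero_of_forall_real_smul_add_nonneg fun t ↦ by
    simpa [smul_sub, smul_smul, mul_comm, sub_eq_neg_add] using H (t * Complex.I)
  have hsa : star z = z := by
    simpa [sub_eq_zero, Complex.I_ne_zero] using him
  rw [hsa, ← two_smul ℂ, smul_eq_zero] at hre
  simpa using hre

end CStarAlgebra

lemma LinearMap.map_star_of_map_isSelfAdjoint {B C : Type*} [AddCommGroup B] [Module ℂ B]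
    [StarAddMonoid B] [StarModule ℂ B] [AddCommGroup C] [Module ℂ C] [StarAddMonoid C]
    [StarModule ℂ C] (f : B →ₗ[ℂ] C) (hf : ∀ h, IsSelfAdjoint h → IsSelfAdjoint (f h)) (x : B) :
    f (star x) = star (f x) := by
  rw [← realPart_add_I_smul_imaginaryPart x]
  simp [(hf _ (realPart x).2).star_eq, (hf _ (imaginaryPart x).2).star_eq,
    (realPart x).2.star_eq, (imaginaryPart x).2.star_eq]

namespace IsCCP

variable {B C : Type*} [NormedRing B] [StarRing B] [NormedAlgebra ℂ B]
  [CStarAlgebra C] [PartialOrder C] {E : B →ₗ[ℂ] C}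

lemma map_star_mul_self_nonneg (hE : IsCCP E) (z : B) : 0 ≤ E (star z * z) := by
  simpa using hE.2 1 ![z] ![1]

variable [StarOrderedRing C]

lemma map_isSelfAdjoint (hE : IsCCP E) {h : B} (hh : IsSelfAdjoint h) :
    IsSelfAdjoint (E h) := by
  have polarization : (4 : ℂ) • h = star (1 + h) * (1 + h) - star (1 - h) * (1 - h) := by
    rw [ofNat_smul_eq_nsmul]
    simp only [star_add, star_sub, star_one, hh.star_eq]
    noncomm_ring
  have h4 : IsSelfAdjoint ((4 : ℂ) • E h) := by
    rw [← map_smul, polarization, map_sub]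
    exact (IsSelfAdjoint.of_nonneg (hE.map_star_mul_self_nonneg _)).sub
      (.of_nonneg (hE.map_star_mul_self_nonneg _))
  simpa using (IsSelfAdjoint.ofNat (R := ℂ) 4).inv₀.smul h4

lemma map_one_le_one [CStarRing B] (hE : IsCCP E) : E 1 ≤ 1 := by
  rcases subsingleton_or_nontrivial B with _ | _
  · rw [Subsingleton.elim (1 : B) 0, map_zero]
    exact zero_le_one
  · refine (CStarAlgebra.norm_le_one_iff_of_nonneg _ ?_).mp ?_
    · simpa using hE.map_star_mul_self_nonneg 1
    · simpa using hE.1 1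

variable [StarModule ℂ B]

lemma map_star (hE : IsCCP E) (x : B) : E (star x) = star (E x) :=
  E.map_star_of_map_isSelfAdjoint (fun _ ↦ hE.map_isSelfAdjoint) x

variable [CStarRing B]

lemma star_map_mul_map_le_map_star_mul (hE : IsCCP E) (x : B) :
    star (E x) * E x ≤ E (star x * x) := by
  have hpos := hE.2 2 ![x, 1] ![1, -E x]
  simp only [Fin.sum_univ_two, Matrix.cons_val_zero, Matrix.cons_val_one, star_one, one_mul,
    mul_one, star_neg, hE.map_star, (hE.map_isSelfAdjoint (.one B)).star_eq] at hpos
  have hcontr : star (E x) * E 1 * E x ≤ star (E x) * E x := by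
    simpa using star_left_conjugate_le_conjugate hE.map_one_le_one (E x)
  rw [← sub_nonneg]
  calc (0 : C) ≤ _ := add_nonneg hpos (sub_nonneg.2 hcontr)
    _ = _ := by noncomm_ring

lemma map_star_mul_eq_of_map_star_mul_self_eq (hE : IsCCP E) {x : B}
    (hx : E (star x * x) = star (E x) * E x) (b : B) : E (star x * b) = star (E x) * E b := by
  rw [← sub_eq_zero]
  refine eq_zero_of_forall_star_smul_add_smul_star_add_nonneg
    (r := E (star b * b) - star (E b) * E b) fun μ ↦ ?_
  -- Kadison–Schwarz at `μ • x + b`; its `x`-diagonal term vanishes by `hx`.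
  convert sub_nonneg.2 (hE.star_map_mul_map_le_map_star_mul (μ • x + b)) using 1
  simp only [star_add, star_smul, add_mul, mul_add, smul_mul_assoc, mul_smul_comm, map_add,
    map_smul, star_sub, star_mul, star_star, ← hE.map_star, hx, smul_add, smul_sub]
  module

end IsCCP

namespace IsGenExpectation

variable {A B C : Type*} [NormedRing A] [StarRing A] [NormedAlgebra ℂ A]
  [NormedRing B] [StarRing B] [CStarRing B] [NormedAlgebra ℂ B] [StarModule ℂ B]
  [CStarAlgebra C] [PartialOrder C] [StarOrderedRing C]
  {ι : A →⋆ₐ[ℂ] B} {j : A →⋆ₐ[ℂ] C} {E : B →ₗ[ℂ] C}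

lemma map_mul_left (hE : IsGenExpectation ι j E) (a : A) (b : B) : E (ι a * b) = j a * E b := by
  have hdom : E (star (ι (star a)) * ι (star a)) = star (E (ι (star a))) * E (ι (star a)) := by
    simp only [← map_star, ← map_mul, hE.2]
  simpa [← map_star, hE.2] using hE.1.map_star_mul_eq_of_map_star_mul_self_eq hdom b

lemma map_mul_right (hE : IsGenExpectation ι j E) (b : B) (a : A) : E (b * ι a) = E b * j a := by
  have := congrArg star (hE.map_mul_left (star a) (star b))
  simpa [← map_star, ← hE.1.map_star] using this

lemma map_mul_mul (hE : IsGenExpectation ι j E) (a : A) (x : B) (a' : A) :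
    E (ι a * x * ι a') = j a * E x * j a' := by
  rw [hE.map_mul_right, hE.map_mul_left]

lemma isSubBimodule_ker (hE : IsGenExpectation ι j E) : IsSubBimodule ι (LinearMap.ker E) := by
  intro a x hx
  rw [LinearMap.mem_ker] at hx
  simp [hE.map_mul_left, hE.map_mul_right, hx]

lemma isSubBimodule_map (hE : IsGenExpectation ι j E) {S : Submodule ℂ B}
    (hS : IsSubBimodule ι S) : IsSubBimodule j (S.map E) := by
  rintro a _ ⟨x, hx, rfl⟩
  exact ⟨⟨ι a * x, (hS a x hx).1, hE.map_mul_left a x⟩,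
    ⟨x * ι a, (hS a x hx).2, hE.map_mul_right x a⟩⟩

variable [PartialOrder A]

lemma kishimotoElem_map (hE : IsGenExpectation ι j E) {x : B} (hx : KishimotoElem ι x) :
    KishimotoElem j (E x) := by
  intro D hD ε hε
  obtain ⟨a, haD, ha0, ha1, hlt⟩ := hx D hD ε hε
  refine ⟨a, haD, ha0, ha1, ?_⟩
  rw [← hE.map_mul_mul]
  exact (hE.1.1 _).trans_lt hlt

lemma kishimotoElem_of_map_eq_zero (hE : IsGenExpectation ι j E) (hι : Isometry ι)
    (hj : Isometry j) {x : B} (hx : KishimotoQuot ι x) (hEx : E x = 0) : KishimotoElem ι x := by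
  intro D hD ε hε
  obtain ⟨a, haD, ha0, ha1, y, hy⟩ := hx D hD (ε / 2) (by positivity)
  refine ⟨a, haD, ha0, ha1, ?_⟩
  have hy_small : ‖ι y‖ < ε / 2 := by
    calc ‖ι y‖ = ‖j y‖ := by
          rw [hι.norm_map_of_map_zero (map_zero ι), hj.norm_map_of_map_zero (map_zero j)]
      _ = ‖E (ι a * x * ι a - ι y)‖ := by rw [map_sub, hE.map_mul_mul, hEx, hE.2]; simp
      _ ≤ ‖ι a * x * ι a - ι y‖ := hE.1.1 _
      _ < ε / 2 := hy
  calc ‖ι a * x * ι a‖ ≤ ‖ι a * x * ι a - ι y‖ + ‖ι y‖ := norm_le_norm_sub_add _ _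
    _ < ε / 2 + ε / 2 := add_lt_add hy hy_small
    _ = ε := add_halves ε

end IsGenExpectation

theorem ker_genExpectation_largest_aperiodic_subbimodule_general
    {A B C : Type*} [NormedRing A] [StarRing A] [NormedAlgebra ℂ A] [PartialOrder A]
    [NormedRing B] [StarRing B] [CStarRing B] [NormedAlgebra ℂ B] [StarModule ℂ B]
    [NormedRing C] [StarRing C] [CStarRing C] [NormedAlgebra ℂ C]
    [StarModule ℂ C] [PartialOrder C] [StarOrderedRing C] [CompleteSpace C]
    (ι : A →⋆ₐ[ℂ] B) (hι : Isometry ι) (j : A →⋆ₐ[ℂ] C) (hj : Isometry j)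
    (hap : AperiodicInclusion ι) (hanti : AntiAperiodic j)
    (E : B →ₗ[ℂ] C) (hE : IsGenExpectation ι j E) :
    IsSubBimodule ι (LinearMap.ker E) ∧
    (∀ x : B, E x = 0 → KishimotoElem ι x) ∧
    (∀ S : Submodule ℂ B, IsSubBimodule ι S → (∀ x ∈ S, KishimotoElem ι x) →
      S ≤ LinearMap.ker E) := by
  let _ : CStarAlgebra C := {}
  refine ⟨hE.isSubBimodule_ker, fun x hx ↦ hE.kishimotoElem_of_map_eq_zero hι hj (hap x) hx,
    fun S hS hSk x hx ↦ ?_⟩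
  have hmap_bot : S.map E = ⊥ := hanti _ (hE.isSubBimodule_map hS) <| by
    rintro _ ⟨y, hy, rfl⟩
    exact hE.kishimotoElem_map (hSk y hy)
  simpa [hmap_bot] using Submodule.mem_map_of_mem (f := E) hx

/-- if `A ⊆ B` is aperiodic and `A ⊆ Ã` is anti-aperiodic, then the kernel of
any generalised expectation `E : B → Ã` is the largest aperiodic `A`-subbimodule of `B`. -/
theorem ker_genExpectation_largest_aperiodic_subbimodule
    {A B C : Type*} [NormedRing A] [StarRing A] [CStarRing A] [NormedAlgebra ℂ A]
    [StarModule ℂ A] [PartialOrder A] [StarOrderedRing A] [CompleteSpace A]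
    [NormedRing B] [StarRing B] [CStarRing B] [NormedAlgebra ℂ B]
    [StarModule ℂ B] [PartialOrder B] [StarOrderedRing B] [CompleteSpace B]
    [NormedRing C] [StarRing C] [CStarRing C] [NormedAlgebra ℂ C]
    [StarModule ℂ C] [PartialOrder C] [StarOrderedRing C] [CompleteSpace C]
    (ι : A →⋆ₐ[ℂ] B) (hι : Isometry ι) (j : A →⋆ₐ[ℂ] C) (hj : Isometry j)
    (hap : AperiodicInclusion ι) (hanti : AntiAperiodic j)
    (E : B →ₗ[ℂ] C) (hE : IsGenExpectation ι j E) :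
    IsSubBimodule ι (LinearMap.ker E) ∧
    (∀ x : B, E x = 0 → KishimotoElem ι x) ∧
    (∀ S : Submodule ℂ B, IsSubBimodule ι S → (∀ x ∈ S, KishimotoElem ι x) →
      S ≤ LinearMap.ker E) :=
  ker_genExpectation_largest_aperiodic_subbimodule_general ι hι j hj hap hanti E hE
end
end

section
/- Let A ⊆ Ã be a C*-inclusion and X ⊆ Ã a closed aperiodic A-subbimodule with X = X*. Then the quotient map A → Ã/X is isometric, i.e. ‖a + b‖ ≥ ‖a‖ for all a ∈ A and b ∈ X. -/
open scoped ComplexOrder ComplexInnerProductSpace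
open Filter Topology

noncomputable section

/-!
For `h = a⋆a` and `0 ≤ r < ‖h‖`, let `e = f(h)` with `f` continuous, vanishing below `r` and equal
to `1` near `‖h‖`. The elements `x` with `e x = x = x e` form a non-zero closed hereditary
subalgebra, and for them `x h x = x (e h e) x ≥ r x²`. Aperiodicity of `c = a⋆b + b⋆a ∈ X` yields
a positive norm-one `x` there with `‖x c x‖ < ε`; since
`x (a + b)⋆(a + b) x = x a⋆a x + x c x + x b⋆b x` and `x b⋆b x ≥ 0`, this gives
`r ≤ ‖x a⋆a x‖ ≤ ‖a + b‖² + ε`.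
-/

section Corner

variable (R : Type*) {A : Type*} [CommSemiring R] [NonUnitalSemiring A] [StarRing A]
  [Module R A] [IsScalarTower R A A] [SMulCommClass R A A]

def corner (e : A) (he : IsSelfAdjoint e) : NonUnitalStarSubalgebra R A where
  carrier := {x | e * x = x ∧ x * e = x}
  add_mem' hx hy := ⟨by rw [mul_add, hx.1, hy.1], by rw [add_mul, hx.2, hy.2]⟩
  zero_mem' := ⟨mul_zero e, zero_mul e⟩
  mul_mem' hx hy := ⟨by rw [← mul_assoc, hx.1], by rw [mul_assoc, hy.2]⟩
  smul_mem' c _ hx := ⟨by rw [mul_smul_comm, hx.1], by rw [smul_mul_assoc, hx.2]⟩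
  star_mem' hx := ⟨by rw [← he.star_eq, ← star_mul, hx.2], by rw [← he.star_eq, ← star_mul, hx.1]⟩

variable {R}

lemma isClosed_corner [TopologicalSpace A] [ContinuousMul A] [T2Space A] (e : A)
    (he : IsSelfAdjoint e) : IsClosed (corner R e he : Set A) :=
  (isClosed_eq (continuous_const.mul continuous_id) continuous_id).inter
    (isClosed_eq (continuous_id.mul continuous_const) continuous_id)

end Corner

section CStarAlgebra

variable {A : Type*} [PartialOrder A]

lemma mul_eq_zero_of_star_mul_mul_eq_zero [NonUnitalCStarAlgebra A] [StarOrderedRing A]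
    {a u : A} (ha : 0 ≤ a) (h : star u * a * u = 0) : a * u = 0 := by
  have hsqrt : star (CFC.sqrt a * u) * (CFC.sqrt a * u) = 0 := by
    rw [star_mul, (CFC.sqrt_nonneg a).isSelfAdjoint.star_eq, mul_assoc, ← mul_assoc (CFC.sqrt a),
      CFC.sqrt_mul_sqrt_self a ha, ← mul_assoc, h]
  rw [CStarRing.star_mul_self_eq_zero_iff] at hsqrt
  rw [← CFC.sqrt_mul_sqrt_self a ha, mul_assoc, hsqrt, mul_zero]

variable [CStarAlgebra A] [StarOrderedRing A]

lemma isHereditary_corner (e : A) (he : IsSelfAdjoint e) : IsHereditary (corner ℂ e he) := by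
  intro a d hd ha had
  have hu : IsSelfAdjoint (1 - e) := (IsSelfAdjoint.one A).sub he
  have hdu : star (1 - e) * d * (1 - e) = 0 := by
    rw [hu.star_eq, sub_mul, one_mul, hd.1, sub_self, zero_mul]
  have hau : star (1 - e) * a * (1 - e) = 0 :=
    le_antisymm (hdu ▸ star_left_conjugate_le_conjugate had _) (star_left_conjugate_nonneg ha _)
  have hae : a * e = a := by
    simpa [mul_sub, sub_eq_zero, eq_comm] using mul_eq_zero_of_star_mul_mul_eq_zero ha hau
  refine ⟨?_, hae⟩
  simpa [he.star_eq, ha.isSelfAdjoint.star_eq] using congrArg star hae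

lemma le_norm_mul_mul_of_mem_corner {e h x : A} {he : IsSelfAdjoint e} (hx : x ∈ corner ℂ e he)
    (hx₀ : 0 ≤ x) (hx₁ : ‖x‖ = 1) {r : ℝ} (hr : 0 ≤ r) (hle : r • (e * e) ≤ e * h * e) :
    r ≤ ‖x * h * x‖ := by
  have hxx : star x * x = x * x := by rw [hx₀.isSelfAdjoint.star_eq]
  have hconj : r • (x * x) ≤ x * h * x := by
    have := hx₀.isSelfAdjoint.conjugate_le_conjugate hle
    rwa [mul_smul_comm, smul_mul_assoc, ← mul_assoc, hx.2, hx.2,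
      show x * (e * h * e) * x = x * e * h * (e * x) by simp only [mul_assoc], hx.2, hx.1] at this
  have hnonneg : 0 ≤ r • (x * x) := smul_nonneg hr (hxx ▸ star_mul_self_nonneg x)
  calc r = ‖r • (x * x)‖ := by
        rw [norm_smul, ← hxx, CStarRing.norm_star_mul_self, hx₁, Real.norm_of_nonneg hr, mul_one,
          mul_one]
    _ ≤ ‖x * h * x‖ := CStarAlgebra.norm_le_norm_of_nonneg_of_le hnonneg hconj

end CStarAlgebra

section Ramp

def ramp (c δ t : ℝ) : ℝ := max 0 (min 1 ((t - c) / δ))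

lemma continuous_ramp (c δ : ℝ) : Continuous (ramp c δ) :=
  continuous_const.max (continuous_const.min ((continuous_id.sub continuous_const).div_const δ))

lemma ramp_eq_zero {c δ t : ℝ} (hδ : 0 ≤ δ) (ht : t ≤ c) : ramp c δ t = 0 :=
  max_eq_left ((min_le_right _ _).trans (div_nonpos_of_nonpos_of_nonneg (by linarith) hδ))

lemma ramp_eq_one {c δ t : ℝ} (hδ : 0 < δ) (ht : c + δ ≤ t) : ramp c δ t = 1 := by
  have : 1 ≤ (t - c) / δ := by rw [le_div_iff₀ hδ]; linarith
  rw [ramp, min_eq_left this, max_eq_right zero_le_one]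

lemma ramp_mul_ramp_add {c δ : ℝ} (hδ : 0 < δ) (t : ℝ) :
    ramp c δ t * ramp (c + δ) δ t = ramp (c + δ) δ t := by
  rcases le_total t (c + δ) with ht | ht
  · rw [ramp_eq_zero hδ.le ht, mul_zero]
  · rw [ramp_eq_one hδ ht, one_mul]

end Ramp

section FunctionalCalculus

variable {A : Type*} [CStarAlgebra A]

lemma cfc_mem_corner {f g : ℝ → ℝ} (hf : Continuous f) (hg : Continuous g)
    (hfg : ∀ t, f t * g t = g t) (h : A) :
    cfc g h ∈ corner ℂ (cfc f h) (cfc_predicate f h) := by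
  refine ⟨?_, ?_⟩
  · rw [← cfc_mul f g h]
    exact cfc_congr fun t _ ↦ hfg t
  · rw [← cfc_mul g f h]
    exact cfc_congr fun t _ ↦ (mul_comm _ _).trans (hfg t)

lemma cfc_ne_zero_of_mem_spectrum {f : ℝ → ℝ} (hf : Continuous f) {h : A} (hh : IsSelfAdjoint h)
    {t : ℝ} (ht : t ∈ spectrum ℝ h) (hft : f t ≠ 0) : cfc f h ≠ 0 := by
  have : Nontrivial A := not_subsingleton_iff_nontrivial.mp fun _ ↦ by
    simp [spectrum.of_subsingleton] at ht
  intro h0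
  have : f t ∈ spectrum ℝ (cfc f h) := cfc_map_spectrum f h ▸ Set.mem_image_of_mem f ht
  rw [h0, spectrum.zero_eq] at this
  exact hft this

variable [PartialOrder A] [StarOrderedRing A]

lemma smul_cfc_mul_self_le {f : ℝ → ℝ} (hf : Continuous f) {h : A} (hh : IsSelfAdjoint h) {r : ℝ}
    (hfr : ∀ t ∈ spectrum ℝ h, f t ≠ 0 → r ≤ t) :
    r • (cfc f h * cfc f h) ≤ cfc f h * h * cfc f h := by
  have hL : r • (cfc f h * cfc f h) = cfc (fun t ↦ r * (f t * f t)) h := by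
    rw [cfc_const_mul r _ h, cfc_mul f f h]
  have hR : cfc f h * h * cfc f h = cfc (fun t ↦ f t * t * f t) h := by
    rw [cfc_mul (fun t ↦ f t * t) f h, cfc_mul f (fun t ↦ t) h, cfc_id' ℝ h]
  rw [hL, hR]
  refine cfc_mono fun t ht ↦ ?_
  by_cases hft : f t = 0
  · simp [hft]
  · nlinarith [mul_le_mul_of_nonneg_right (hfr t ht hft) (mul_self_nonneg (f t))]

lemma exists_nontrivClosedHereditary_le_norm_mul_mul {h : A} (hh : 0 ≤ h) {r : ℝ} (hr₀ : 0 ≤ r)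
    (hr : r < ‖h‖) : ∃ D : NonUnitalStarSubalgebra ℂ A, NontrivClosedHereditary D ∧
      ∀ x ∈ D, 0 ≤ x → ‖x‖ = 1 → r ≤ ‖x * h * x‖ := by
  have : Nontrivial A := ⟨h, 0, fun h0 ↦ by simp [h0] at hr; linarith⟩
  set δ := (‖h‖ - r) / 2 with hδ_def
  have hδ : 0 < δ := by linarith
  have he := cfc_predicate (ramp r δ) h
  have hfr : ∀ t ∈ spectrum ℝ h, ramp r δ t ≠ 0 → r ≤ t := fun t _ ht ↦
    le_of_not_ge fun htr ↦ ht (ramp_eq_zero hδ.le htr)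
  refine ⟨corner ℂ _ he, ⟨isClosed_corner _ he, ⟨cfc (ramp (r + δ) δ) h, ?_, ?_⟩,
    isHereditary_corner _ he⟩, fun x hx hx₀ hx₁ ↦ le_norm_mul_mul_of_mem_corner hx hx₀ hx₁ hr₀
      (smul_cfc_mul_self_le (continuous_ramp r δ) hh.isSelfAdjoint hfr)⟩
  · exact cfc_mem_corner (continuous_ramp _ _) (continuous_ramp _ _) (ramp_mul_ramp_add hδ) h
  · refine cfc_ne_zero_of_mem_spectrum (continuous_ramp _ _) hh.isSelfAdjoint
      (CStarAlgebra.norm_mem_spectrum_of_nonneg hh) ?_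
    rw [ramp_eq_one hδ (by linarith)]
    exact one_ne_zero

end FunctionalCalculus

lemma norm_conj_star_mul_self_le {C : Type*} [CStarAlgebra C] [PartialOrder C]
    [StarOrderedRing C] {y : C} (hy : IsSelfAdjoint y) (hy₁ : ‖y‖ ≤ 1) (p q : C) :
    ‖y * (star p * p) * y‖ ≤ ‖p + q‖ ^ 2 + ‖y * (star p * q + star q * p) * y‖ := by
  have hexpand : y * (star p * p) * y + y * (star q * q) * y =
      star ((p + q) * y) * ((p + q) * y) - y * (star p * q + star q * p) * y := by
    simp only [star_mul, star_add, hy.star_eq]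
    noncomm_ring
  have hpq : ‖star ((p + q) * y) * ((p + q) * y)‖ ≤ ‖p + q‖ ^ 2 := by
    rw [CStarRing.norm_star_mul_self, ← sq]
    gcongr
    exact (norm_mul_le _ _).trans (mul_le_of_le_one_right (norm_nonneg _) hy₁)
  calc ‖y * (star p * p) * y‖ ≤ ‖y * (star p * p) * y + y * (star q * q) * y‖ :=
        CStarAlgebra.norm_le_norm_of_nonneg_of_le (hy.conjugate_nonneg (star_mul_self_nonneg p))
          (le_add_of_nonneg_right (hy.conjugate_nonneg (star_mul_self_nonneg q)))
    _ ≤ ‖p + q‖ ^ 2 + ‖y * (star p * q + star q * p) * y‖ := by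
        rw [hexpand]
        exact (norm_sub_le _ _).trans (by gcongr)

theorem quotient_by_aperiodic_subbimodule_isometric_general
    {A C : Type*} [NormedRing A] [StarRing A] [CStarRing A] [NormedAlgebra ℂ A]
    [StarModule ℂ A] [PartialOrder A] [StarOrderedRing A] [CompleteSpace A]
    [NormedRing C] [StarRing C] [CStarRing C] [NormedAlgebra ℂ C]
    [StarModule ℂ C] [PartialOrder C] [StarOrderedRing C] [CompleteSpace C]
    (ι : A →⋆ₐ[ℂ] C) (hι : Isometry ι)
    (X : Submodule ℂ C) (hXb : IsSubBimodule ι X)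
    (hXstar : ∀ x ∈ X, star x ∈ X) (hXap : ∀ x ∈ X, KishimotoElem ι x) :
    ∀ (a : A), ∀ b ∈ X, ‖a‖ ≤ ‖ι a + b‖ := by
  intro a b hb
  let : CStarAlgebra A := {}
  let : CStarAlgebra C := {}
  have hι_norm : ∀ z, ‖ι z‖ = ‖z‖ := hι.norm_map_of_map_zero (map_zero ι)
  have hc : star (ι a) * b + star b * ι a ∈ X :=
    X.add_mem (map_star ι a ▸ (hXb (star a) b hb).1) (hXb a (star b) (hXstar b hb)).2
  have key (r : ℝ) (hr₀ : 0 ≤ r) (hr : r < ‖star a * a‖) (ε : ℝ) (hε : 0 < ε) :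
      r ≤ ‖ι a + b‖ ^ 2 + ε := by
    obtain ⟨D, hD, hD_le⟩ :=
      exists_nontrivClosedHereditary_le_norm_mul_mul (star_mul_self_nonneg a) hr₀ hr
    obtain ⟨x, hxD, hx₀, hx₁, hxc⟩ := hXap _ hc D hD ε hε
    calc r ≤ ‖x * (star a * a) * x‖ := hD_le x hxD hx₀ hx₁
      _ = ‖ι x * (star (ι a) * ι a) * ι x‖ := by rw [← hι_norm]; simp only [map_mul, map_star]
      _ ≤ ‖ι a + b‖ ^ 2 + ‖ι x * (star (ι a) * b + star b * ι a) * ι x‖ :=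
        norm_conj_star_mul_self_le (hx₀.isSelfAdjoint.map ι) (by rw [hι_norm, hx₁]) _ _
      _ ≤ ‖ι a + b‖ ^ 2 + ε := by gcongr
  have hsq : ‖a‖ ^ 2 ≤ ‖ι a + b‖ ^ 2 := by
    rw [sq ‖a‖, ← CStarRing.norm_star_mul_self]
    refine le_of_forall_lt_imp_le_of_dense fun r hr ↦ ?_
    rcases lt_or_ge r 0 with hr₀ | hr₀
    · exact hr₀.le.trans (sq_nonneg _)
    · exact le_of_forall_pos_le_add (key r hr₀ hr)
  exact le_of_pow_le_pow_left₀ two_ne_zero (norm_nonneg _) hsq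

/-- if `X ⊆ Ã` is a closed aperiodic `A`-subbimodule with `X = X*`, then the
quotient map `A → Ã/X` is isometric: `‖a + b‖ ≥ ‖a‖` for all `a ∈ A` and `b ∈ X`. -/
theorem quotient_by_aperiodic_subbimodule_isometric
    {A C : Type*} [NormedRing A] [StarRing A] [CStarRing A] [NormedAlgebra ℂ A]
    [StarModule ℂ A] [PartialOrder A] [StarOrderedRing A] [CompleteSpace A]
    [NormedRing C] [StarRing C] [CStarRing C] [NormedAlgebra ℂ C]
    [StarModule ℂ C] [PartialOrder C] [StarOrderedRing C] [CompleteSpace C]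
    (ι : A →⋆ₐ[ℂ] C) (hι : Isometry ι)
    (X : Submodule ℂ C) (hXc : IsClosed (X : Set C)) (hXb : IsSubBimodule ι X)
    (hXstar : ∀ x ∈ X, star x ∈ X) (hXap : ∀ x ∈ X, KishimotoElem ι x) :
    ∀ (a : A), ∀ b ∈ X, ‖a‖ ≤ ‖ι a + b‖ :=
  quotient_by_aperiodic_subbimodule_isometric_general ι hι X hXb hXstar hXap
end
end

section
/- Let A ⊆ B be a C*-inclusion and f₁, f₂ pure states on A whose GNS representations are unitarily equivalent. If f₁ extends uniquely to a state on B, then so does f₂. -/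
open scoped ComplexOrder ComplexInnerProductSpace
open Filter Topology

noncomputable section

section States

variable {A : Type*} [NormedRing A] [NormedAlgebra ℂ A] [PartialOrder A]

/-- A state on a C*-algebra: a positive linear functional of norm one. -/
def IsState (f : A →L[ℂ] ℂ) : Prop := ‖f‖ = 1 ∧ ∀ a : A, 0 ≤ a → 0 ≤ f a

/-- A pure state: an extreme point of the state space. -/
def IsPureState (f : A →L[ℂ] ℂ) : Prop :=
  IsState f ∧ ∀ g h : A →L[ℂ] ℂ, IsState g → IsState h →
    ∀ t : ℝ, 0 < t → t < 1 → f = (t : ℂ) • g + (((1 - t : ℝ)) : ℂ) • h → g = f ∧ h = f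

end States

/-- A representation of `A` on a complex Hilbert space. -/
structure RepOn (A : Type*) [NormedRing A] [StarRing A] [NormedAlgebra ℂ A] where
  space : Type*
  [ng : NormedAddCommGroup space]
  [ip : InnerProductSpace ℂ space]
  [cs : CompleteSpace space]
  π : A →⋆ₐ[ℂ] (space →L[ℂ] space)

attribute [instance] RepOn.ng RepOn.ip RepOn.cs

section Reps

variable {A : Type*} [NormedRing A] [StarRing A] [NormedAlgebra ℂ A]

/-- Unitary equivalence of representations. -/
def RepUnitarilyEquiv (R S : RepOn A) : Prop :=
  ∃ U : R.space ≃ₗᵢ[ℂ] S.space, ∀ (a : A) (v : R.space), U (R.π a v) = S.π a (U v)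

/-- `R` together with the unit cyclic vector `ξ` is a GNS representation for `f`. -/
def IsGNSRep (f : A →L[ℂ] ℂ) (R : RepOn A) (ξ : R.space) : Prop :=
  ‖ξ‖ = 1 ∧ (∀ x : A, f x = ⟪ξ, R.π x ξ⟫) ∧
    Dense ((Submodule.span ℂ (Set.range fun x : A => R.π x ξ) : Submodule ℂ R.space) :
      Set R.space)

/-- Irreducibility: the representation is non-zero and has no proper non-trivial closed
invariant subspace. -/
def RepIrreducible (R : RepOn A) : Prop :=
  (∃ (a : A) (v : R.space), R.π a v ≠ 0) ∧
    ∀ S : Submodule ℂ R.space, IsClosed (S : Set R.space) →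
      (∀ (a : A), ∀ v ∈ S, R.π a v ∈ S) → S = ⊥ ∨ S = ⊤

end Reps

section UExt

variable {A B : Type*} [NormedRing A] [StarRing A] [NormedAlgebra ℂ A] [PartialOrder A]
  [NormedRing B] [StarRing B] [NormedAlgebra ℂ B] [PartialOrder B]

/-- The pure state `f` on `A` extends uniquely to a state on `B`. -/
def UniquelyExtends (ι : A →⋆ₐ[ℂ] B) (f : A →L[ℂ] ℂ) : Prop :=
  ∃! g : B →L[ℂ] ℂ, IsState g ∧ ∀ a : A, g (ι a) = f a

/-- The almost extension property: the pure states on `A` extending uniquely to `B` are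
weak-* dense in the pure state space of `A`. -/
def AlmostExtensionProperty (ι : A →⋆ₐ[ℂ] B) : Prop :=
  ∀ f : A →L[ℂ] ℂ, IsPureState f → ∀ ε : ℝ, 0 < ε → ∀ s : Finset A,
    ∃ g : A →L[ℂ] ℂ, IsPureState g ∧ UniquelyExtends ι g ∧ ∀ a ∈ s, ‖f a - g a‖ < ε

end UExt


/-!
After transporting along the unitary, `f₁` and `f₂` are the vector states of two cyclic unit
vectors `ξ` and `η` of one representation `π`. If a state `g` on `B` restricts to the vector state
of `v`, Cauchy–Schwarz in the GNS space of `g` gives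
`‖g(ι(c)* · ι(c)) - g(ι(d)* · ι(d))‖ ≤ ‖π(c)v - π(d)v‖ (‖π(c)v‖ + ‖π(d)v‖)`,
so these conjugated states converge whenever `π(cₙ)v` does, and the limit restricts to the vector
state of `lim π(cₙ)v`. Approximating `η` by `π(cₙ)ξ` turns the unique extension `g₁` of `f₁` into an
extension of `f₂`. Conversely, any extension `g` of `f₂`, conjugated along `π(dₘ)η → ξ`, becomes an
extension of `f₁`, hence `g₁`; the estimate then forces `g` to be the limit of `g₁(ι(cₙ)* · ι(cₙ))`.
-/

theorem norm_inner_map_self_sub_inner_map_self_le {𝕜 E : Type*} [RCLike 𝕜]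
    [SeminormedAddCommGroup E] [InnerProductSpace 𝕜 E] (T : E →L[𝕜] E) (p q : E) :
    ‖inner 𝕜 p (T p) - inner 𝕜 q (T q)‖ ≤ ‖T‖ * (‖p - q‖ * (‖p‖ + ‖q‖)) := by
  have split : inner 𝕜 p (T p) - inner 𝕜 q (T q) =
      inner 𝕜 (p - q) (T p) + inner 𝕜 q (T (p - q)) := by
    rw [inner_sub_left, map_sub, inner_sub_right]; ring
  calc ‖inner 𝕜 p (T p) - inner 𝕜 q (T q)‖
      ≤ ‖p - q‖ * (‖T‖ * ‖p‖) + ‖q‖ * (‖T‖ * ‖p - q‖) := by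
        rw [split]
        refine (norm_add_le _ _).trans (add_le_add ?_ ?_) <;>
          exact (norm_inner_le_norm _ _).trans (by gcongr; exact T.le_opNorm _)
    _ = ‖T‖ * (‖p - q‖ * (‖p‖ + ‖q‖)) := by ring

theorem CStarRing.norm_one_le {B : Type*} [NormedRing B] [StarRing B] [CStarRing B] :
    ‖(1 : B)‖ ≤ 1 := by
  rcases subsingleton_or_nontrivial B with hB | hB
  · simp [Subsingleton.elim (1 : B) 0]
  · exact CStarRing.norm_one.le

namespace PositiveLinearMap

variable {B : Type*} [CStarAlgebra B] [PartialOrder B] [StarOrderedRing B] (f : B →ₚ[ℂ] ℂ)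

theorem norm_leftMulMapPreGNS_le (b : B) : ‖f.leftMulMapPreGNS b‖ ≤ ‖b‖ :=
  LinearMap.mkContinuous_norm_le _ (norm_nonneg b) _

theorem apply_star_mul_mul (x b y : B) :
    f (star x * b * y) = ⟪f.toPreGNS x, f.leftMulMapPreGNS b (f.toPreGNS y)⟫ := by
  simp [preGNS_inner_def, mul_assoc]

theorem norm_toPreGNS_one_sq : ‖f.toPreGNS 1‖ ^ 2 = (f 1).re := by
  rw [preGNS_norm_def, Real.sq_sqrt] <;> simp only [ofPreGNS_toPreGNS, star_one, one_mul]
  simpa using (f.map_nonneg (zero_le_one (α := B))).1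

theorem norm_apply_le (b : B) : ‖f b‖ ≤ (f 1).re * ‖b‖ := by
  have hb : f b = f (star 1 * b * 1) := by simp
  calc ‖f b‖ ≤ ‖f.toPreGNS 1‖ * (‖f.leftMulMapPreGNS b‖ * ‖f.toPreGNS 1‖) := by
        rw [hb, apply_star_mul_mul]
        exact (norm_inner_le_norm _ _).trans (by gcongr; exact ContinuousLinearMap.le_opNorm _ _)
    _ ≤ ‖f.toPreGNS 1‖ * (‖b‖ * ‖f.toPreGNS 1‖) := by gcongr; exact f.norm_leftMulMapPreGNS_le b
    _ = (f 1).re * ‖b‖ := by rw [← norm_toPreGNS_one_sq]; ring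

theorem norm_apply_conj_sub_apply_conj_le (b x y : B) :
    ‖f (star x * b * x) - f (star y * b * y)‖ ≤
      ‖b‖ * (‖f.toPreGNS (x - y)‖ * (‖f.toPreGNS x‖ + ‖f.toPreGNS y‖)) := by
  rw [apply_star_mul_mul, apply_star_mul_mul, map_sub]
  exact (norm_inner_map_self_sub_inner_map_self_le _ _ _).trans
    (by gcongr; exact f.norm_leftMulMapPreGNS_le b)

end PositiveLinearMap

@[simp]
theorem PositiveLinearMap.mk₀_apply {R E₁ E₂ : Type*} [Semiring R]
    [AddCommGroup E₁] [PartialOrder E₁] [IsOrderedAddMonoid E₁]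
    [AddCommGroup E₂] [PartialOrder E₂] [IsOrderedAddMonoid E₂] [Module R E₁] [Module R E₂]
    (f : E₁ →ₗ[R] E₂) (hf : ∀ x, 0 ≤ x → 0 ≤ f x) (x : E₁) :
    PositiveLinearMap.mk₀ f hf x = f x :=
  rfl

section States

variable {B : Type*} [CStarAlgebra B] [PartialOrder B] [StarOrderedRing B] {g : B →L[ℂ] ℂ}

theorem isState_of_nonneg_of_apply_one (hg : ∀ b, 0 ≤ b → 0 ≤ g b) (h1 : g 1 = 1) :
    IsState g := by
  refine ⟨le_antisymm (g.opNorm_le_bound zero_le_one fun b => ?_) ?_, hg⟩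
  · simpa [h1] using (PositiveLinearMap.mk₀ (g : B →ₗ[ℂ] ℂ) hg).norm_apply_le b
  · simpa [h1] using
      (g.le_opNorm 1).trans (mul_le_of_le_one_right (norm_nonneg _) CStarRing.norm_one_le)

end States

namespace ContinuousLinearMap

variable {B : Type*} [NormedRing B] [StarRing B] [NormedAlgebra ℂ B]

def conjBy (g : B →L[ℂ] ℂ) (x : B) : B →L[ℂ] ℂ :=
  g.comp (mulLeftRight ℂ B (star x) x)

@[simp]
theorem conjBy_apply (g : B →L[ℂ] ℂ) (x b : B) : g.conjBy x b = g (star x * b * x) := by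
  simp [conjBy]

@[simp]
theorem conjBy_one (g : B →L[ℂ] ℂ) : g.conjBy 1 = g := by
  ext b; simp

theorem conjBy_mul (g : B →L[ℂ] ℂ) (x y : B) : g.conjBy (x * y) = (g.conjBy y).conjBy x := by
  ext b; simp [star_mul, mul_assoc]

end ContinuousLinearMap

theorem exists_seq_tendsto_of_mem_closure_range {α X : Type*} [TopologicalSpace X]
    [FrechetUrysohnSpace X] {f : α → X} {x : X} (hx : x ∈ closure (Set.range f)) :
    ∃ u : ℕ → α, Tendsto (f ∘ u) atTop (𝓝 x) := by
  obtain ⟨y, hy, hlim⟩ := mem_closure_iff_seq_limit.mp hx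
  choose u hu using hy
  exact ⟨u, by rwa [show f ∘ u = y from funext hu]⟩

section VectorStates

variable {A B H : Type*} [Ring A] [StarRing A] [Algebra ℂ A]
  [CStarAlgebra B] [NormedAddCommGroup H] [InnerProductSpace ℂ H] [CompleteSpace H]
  {π : A →⋆ₐ[ℂ] (H →L[ℂ] H)} {ι : A →⋆ₐ[ℂ] B} {g : B →L[ℂ] ℂ} {v : H}

theorem apply_star_mul_mul_eq_inner (hgv : ∀ a, g (ι a) = ⟪v, π a v⟫) (c a d : A) :
    g (star (ι c) * ι a * ι d) = ⟪π c v, π a (π d v)⟫ := by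
  rw [← map_star, ← map_mul, ← map_mul, hgv, map_mul, map_mul, map_star,
    ContinuousLinearMap.star_eq_adjoint]
  exact ContinuousLinearMap.adjoint_inner_right _ _ _

variable [PartialOrder B] [StarOrderedRing B]

theorem norm_conjBy_sub_conjBy_le (hg : ∀ b, 0 ≤ b → 0 ≤ g b)
    (hgv : ∀ a, g (ι a) = ⟪v, π a v⟫) (c d : A) :
    ‖g.conjBy (ι c) - g.conjBy (ι d)‖ ≤ ‖π c v - π d v‖ * (‖π c v‖ + ‖π d v‖) := by
  set F := PositiveLinearMap.mk₀ (g : B →ₗ[ℂ] ℂ) hg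
  have norm_toPreGNS : ∀ c, ‖F.toPreGNS (ι c)‖ = ‖π c v‖ := fun c => by
    have h := apply_star_mul_mul_eq_inner hgv c 1 c
    rw [map_one, mul_one, map_one, one_apply_eq_self, inner_self_eq_norm_sq_to_K] at h
    rw [PositiveLinearMap.preGNS_norm_def, PositiveLinearMap.ofPreGNS_toPreGNS]
    simp [F, h, ← Complex.ofReal_pow]
  refine ContinuousLinearMap.opNorm_le_bound _ (by positivity) fun b => ?_
  have h := F.norm_apply_conj_sub_apply_conj_le b (ι c) (ι d)
  rw [← map_sub ι, norm_toPreGNS, norm_toPreGNS, norm_toPreGNS, map_sub,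
    sub_apply] at h
  simpa [F, mul_comm] using h

theorem exists_isState_tendsto_conjBy {g : B →L[ℂ] ℂ} {v w : H}
    (hg : ∀ b, 0 ≤ b → 0 ≤ g b) (hgv : ∀ a, g (ι a) = ⟪v, π a v⟫) {c : ℕ → A}
    (hc : Tendsto (fun n => π (c n) v) atTop (𝓝 w)) (hw : ‖w‖ = 1) :
    ∃ h : B →L[ℂ] ℂ, IsState h ∧ (∀ a, h (ι a) = ⟪w, π a w⟫) ∧
      Tendsto (fun n => g.conjBy (ι (c n))) atTop (𝓝 h) := by
  have hcauchy : CauchySeq fun n => g.conjBy (ι (c n)) := by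
    rw [cauchySeq_iff_tendsto_dist_atTop_0]
    have hc₂ : Tendsto (fun p : ℕ × ℕ => (π (c p.1) v, π (c p.2) v)) atTop (𝓝 (w, w)) := by
      rw [← prod_atTop_atTop_eq, nhds_prod_eq]
      exact hc.prodMap hc
    have hbound : Tendsto (fun p : ℕ × ℕ =>
        ‖π (c p.1) v - π (c p.2) v‖ * (‖π (c p.1) v‖ + ‖π (c p.2) v‖)) atTop (𝓝 0) := by
      have hcont : Continuous fun q : H × H => ‖q.1 - q.2‖ * (‖q.1‖ + ‖q.2‖) := by fun_prop
      simpa [Function.comp_def] using (hcont.tendsto (w, w)).comp hc₂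
    refine squeeze_zero (fun _ => dist_nonneg) (fun p => ?_) hbound
    rw [dist_eq_norm]
    exact norm_conjBy_sub_conjBy_le hg hgv _ _
  obtain ⟨h, hlim⟩ := cauchySeq_tendsto_of_complete hcauchy
  have hlim_apply : ∀ b, Tendsto (fun n => g (star (ι (c n)) * b * ι (c n))) atTop (𝓝 (h b)) :=
    fun b => by
      simpa [Function.comp_def] using
        ((ContinuousLinearMap.apply ℂ ℂ b).continuous.tendsto h).comp hlim
  have hhv : ∀ a, h (ι a) = ⟪w, π a w⟫ := fun a => by
    refine tendsto_nhds_unique (hlim_apply (ι a)) ?_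
    simp only [apply_star_mul_mul_eq_inner hgv]
    exact hc.inner (((π a).continuous.tendsto w).comp hc)
  have hh_nonneg : ∀ b, 0 ≤ b → 0 ≤ h b := fun b hb =>
    ge_of_tendsto' (hlim_apply b) fun n => hg _ (star_left_conjugate_nonneg hb _)
  have hh_one : h 1 = 1 := by
    rw [← map_one ι, hhv, map_one, one_apply_eq_self, inner_self_eq_norm_sq_to_K, hw]
    norm_num
  exact ⟨h, isState_of_nonneg_of_apply_one hh_nonneg hh_one, hhv, hlim⟩

theorem norm_conjBy_sub_le_of_unique {g₁ g : B →L[ℂ] ℂ} {ξ η : H}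
    (h₁ : ∀ h : B →L[ℂ] ℂ, IsState h → (∀ a, h (ι a) = ⟪ξ, π a ξ⟫) → h = g₁)
    (hg : IsState g) (hgv : ∀ a, g (ι a) = ⟪η, π a η⟫) (hξ : ‖ξ‖ = 1)
    (hξη : ξ ∈ closure (Set.range fun a => π a η)) (a : A) :
    ‖g₁.conjBy (ι a) - g‖ ≤ ‖π a ξ - η‖ * (‖π a ξ‖ + ‖η‖) := by
  obtain ⟨c, hc⟩ := exists_seq_tendsto_of_mem_closure_range hξη
  obtain ⟨h, hh, hhv, hlim⟩ := exists_isState_tendsto_conjBy hg.2 hgv hc hξ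
  obtain rfl := h₁ h hh hhv
  have hlim_a : Tendsto (fun n => g.conjBy (ι (a * c n))) atTop (𝓝 (h.conjBy (ι a))) := by
    simp only [map_mul, ContinuousLinearMap.conjBy_mul]
    exact ((continuous_id.clm_comp continuous_const).tendsto h).comp hlim
  have hπ : Tendsto (fun n => π (a * c n) η) atTop (𝓝 (π a ξ)) := by
    simp only [map_mul]
    exact ((π a).continuous.tendsto ξ).comp hc
  have hbound := fun n => norm_conjBy_sub_conjBy_le hg.2 hgv (a * c n) 1
  simp only [map_one, ContinuousLinearMap.conjBy_one, one_apply_eq_self] at hbound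
  exact le_of_tendsto_of_tendsto' (hlim_a.sub tendsto_const_nhds).norm
    ((hπ.sub tendsto_const_nhds).norm.mul (hπ.norm.add tendsto_const_nhds)) hbound

end VectorStates

section GNS

variable {A : Type*} [NormedRing A] [StarRing A] [NormedAlgebra ℂ A]

theorem IsGNSRep.denseRange {f : A →L[ℂ] ℂ} {R : RepOn A} {ξ : R.space} (h : IsGNSRep f R ξ) :
    DenseRange fun a : A => R.π a ξ := by
  let T : A →ₗ[ℂ] R.space :=
    (ContinuousLinearMap.apply ℂ R.space ξ).toLinearMap ∘ₗ R.π.toAlgHom.toLinearMap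
  have hrange : (Set.range fun a : A => R.π a ξ) = LinearMap.range T :=
    (LinearMap.coe_range T).symm
  have hdense := h.2.2
  rwa [hrange, Submodule.span_eq, ← hrange] at hdense

theorem RepUnitarilyEquiv.exists_isGNSRep {R₁ R₂ : RepOn A} (hR : RepUnitarilyEquiv R₁ R₂)
    {f : A →L[ℂ] ℂ} {ξ : R₂.space} (h : IsGNSRep f R₂ ξ) : ∃ η : R₁.space, IsGNSRep f R₁ η := by
  obtain ⟨U, hU⟩ := hR
  have hπ : (fun a => R₁.π a (U.symm ξ)) = U.symm ∘ fun a => R₂.π a ξ := funext fun a => by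
    rw [Function.comp_apply, eq_comm, LinearIsometryEquiv.symm_apply_eq, hU, U.apply_symm_apply]
  refine ⟨U.symm ξ, by rw [LinearIsometryEquiv.norm_map]; exact h.1, fun x => ?_, ?_⟩
  · rw [h.2.1, ← U.symm.inner_map_map, congrFun hπ x, Function.comp_apply]
  · have hdense : DenseRange fun a => R₁.π a (U.symm ξ) :=
      hπ ▸ U.symm.surjective.denseRange.comp h.denseRange U.symm.continuous
    exact hdense.mono Submodule.subset_span

theorem UniquelyExtends.of_isGNSRep [PartialOrder A] {B : Type*} [CStarAlgebra B] [PartialOrder B]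
    [StarOrderedRing B] {ι : A →⋆ₐ[ℂ] B} {f₁ f₂ : A →L[ℂ] ℂ} {R : RepOn A} {ξ η : R.space}
    (hξ : IsGNSRep f₁ R ξ) (hη : IsGNSRep f₂ R η) (h₁ : UniquelyExtends ι f₁) :
    UniquelyExtends ι f₂ := by
  simp only [UniquelyExtends, hξ.2.1, hη.2.1] at h₁ ⊢
  obtain ⟨g₁, ⟨hg₁, hg₁v⟩, huniq⟩ := h₁
  obtain ⟨c, hc⟩ := exists_seq_tendsto_of_mem_closure_range (hξ.denseRange η)
  obtain ⟨g₂, hg₂, hg₂v, hlim⟩ := exists_isState_tendsto_conjBy hg₁.2 hg₁v hc hη.1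
  refine ⟨g₂, ⟨hg₂, hg₂v⟩, fun g ⟨hg, hgv⟩ => tendsto_nhds_unique ?_ hlim⟩
  rw [tendsto_iff_norm_sub_tendsto_zero]
  refine squeeze_zero (fun _ => norm_nonneg _) (fun n => norm_conjBy_sub_le_of_unique
    (fun h hh hhv => huniq h ⟨hh, hhv⟩) hg hgv hξ.1 (hη.denseRange ξ) (c n)) ?_
  simpa using (hc.sub (tendsto_const_nhds (x := η))).norm.mul
    (hc.norm.add (tendsto_const_nhds (x := ‖η‖)))

end GNS

theorem uniquelyExtends_of_gns_equiv_general
    {A B : Type*} [NormedRing A] [StarRing A] [NormedAlgebra ℂ A]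
    [PartialOrder A]
    [NormedRing B] [StarRing B] [CStarRing B] [NormedAlgebra ℂ B]
    [StarModule ℂ B] [PartialOrder B] [StarOrderedRing B] [CompleteSpace B]
    (ι : A →⋆ₐ[ℂ] B)
    (f₁ f₂ : A →L[ℂ] ℂ)
    (hequiv : ∃ (R₁ R₂ : RepOn A) (ξ₁ : R₁.space) (ξ₂ : R₂.space),
      IsGNSRep f₁ R₁ ξ₁ ∧ IsGNSRep f₂ R₂ ξ₂ ∧ RepUnitarilyEquiv R₁ R₂)
    (h₁ : UniquelyExtends ι f₁) :
    UniquelyExtends ι f₂ := by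
  let : CStarAlgebra B := {}
  obtain ⟨R₁, R₂, ξ₁, ξ₂, hξ₁, hξ₂, hR⟩ := hequiv
  obtain ⟨η, hη⟩ := hR.exists_isGNSRep hξ₂
  exact h₁.of_isGNSRep hξ₁ hη

/-- if two pure states on `A` have unitarily equivalent GNS representations
and the first extends uniquely to `B`, then so does the second. -/
theorem uniquelyExtends_of_gns_equiv
    {A B : Type*} [NormedRing A] [StarRing A] [CStarRing A] [NormedAlgebra ℂ A]
    [StarModule ℂ A] [PartialOrder A] [StarOrderedRing A] [CompleteSpace A]
    [NormedRing B] [StarRing B] [CStarRing B] [NormedAlgebra ℂ B]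
    [StarModule ℂ B] [PartialOrder B] [StarOrderedRing B] [CompleteSpace B]
    (ι : A →⋆ₐ[ℂ] B) (hι : Isometry ι)
    (f₁ f₂ : A →L[ℂ] ℂ) (hf₁ : IsPureState f₁) (hf₂ : IsPureState f₂)
    (hequiv : ∃ (R₁ R₂ : RepOn A) (ξ₁ : R₁.space) (ξ₂ : R₂.space),
      IsGNSRep f₁ R₁ ξ₁ ∧ IsGNSRep f₂ R₂ ξ₂ ∧ RepUnitarilyEquiv R₁ R₂)
    (h₁ : UniquelyExtends ι f₁) :
    UniquelyExtends ι f₂ :=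
  uniquelyExtends_of_gns_equiv_general ι f₁ f₂ hequiv h₁
end
end
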